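/- Let A, D : [0,∞) → ℝ^{n×n} be continuous, let M : [0,∞) → ℝ^{n×n} be a continuously differentiable symmetric-matrix-valued map with p̲ I ⪯ M(t) ⪯ p̄ I for all t ≥ 0 (p̄ ≥ p̲ > 0), and suppose there are constants λ₀ > 0, C ≥ 0, a > 0 such that for all t ≥ 0: (i) M′(t) + A(t)ᵀ M(t) + M(t) A(t) ⪯ −λ₀ M(t), and (ii) the operator norm of D(t) satisfies ‖D(t)‖ ≤ C e^{−a t}. Then every differentiable δ : [0,∞) → ℝⁿ with δ′(t) = (A(t) + D(t)) δ(t) satisfies ‖δ(t)‖ ≤ √(p̄/p̲) · e^{C p̄ /(p̲ a)} · e^{−λ₀ t / 2} · ‖δ(0)‖ for all t ≥ 0. -/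

import Mathlib

/-!
The Lyapunov function `V(t) = δᵀ M δ` satisfies `V' = δᵀ (M' + AᵀM + MA) δ + 2 δᵀ M D δ`.
Cauchy–Schwarz for the inner product defined by `M`, together with `p₁ I ⪯ M ⪯ p₂ I` and the
bound on `D`, gives `|δᵀ M D δ| ≤ C e^{-at} (p₂/p₁) V`, so `V' ≤ (-λ₀ + 2 C (p₂/p₁) e^{-at}) V`.
Integrating this rate, whose perturbation has total mass at most `2 C p₂ / (p₁ a)`, yields
`V(t) ≤ e^{2 C p₂/(p₁ a)} e^{-λ₀ t} V(0)`, and comparing `V` with `p₁ ‖δ‖²` and `p₂ ‖δ‖²`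
gives the bound.
-/

open Matrix

attribute [local instance] Matrix.normedAddCommGroup Matrix.normedSpace

theorem le_mul_exp_sub_of_hasDerivAt {V V' G G' : ℝ → ℝ} {t₀ t : ℝ}
    (hV : ∀ s ∈ Set.Ici t₀, HasDerivAt V (V' s) s) (hG : ∀ s ∈ Set.Ici t₀, HasDerivAt G (G' s) s)
    (hle : ∀ s ∈ Set.Ici t₀, V' s ≤ G' s * V s) (ht : t₀ ≤ t) :
    V t ≤ V t₀ * Real.exp (G t - G t₀) := by
  have hφ : ∀ s ∈ Set.Ici t₀, HasDerivAt (fun s => V s * Real.exp (-G s))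
      ((V' s - G' s * V s) * Real.exp (-G s)) s := fun s hs =>
    ((hV s hs).mul (hG s hs).neg.exp).congr_deriv (by simp only [Pi.neg_apply]; ring)
  have hanti : AntitoneOn (fun s => V s * Real.exp (-G s)) (Set.Ici t₀) := by
    refine antitoneOn_of_hasDerivWithinAt_nonpos (convex_Ici t₀)
      (fun s hs => (hφ s hs).continuousAt.continuousWithinAt)
      (fun s hs => (hφ s (interior_subset hs)).hasDerivWithinAt) fun s hs => ?_
    exact mul_nonpos_of_nonpos_of_nonneg (by linarith [hle s (interior_subset hs)])
      (Real.exp_pos _).le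
  rw [Real.exp_sub, mul_div_assoc', le_div_iff₀ (Real.exp_pos _)]
  calc V t * Real.exp (G t₀) = V t * Real.exp (-G t) * Real.exp (G t₀) * Real.exp (G t) := by
        rw [Real.exp_neg]; field_simp
    _ ≤ V t₀ * Real.exp (-G t₀) * Real.exp (G t₀) * Real.exp (G t) := by
        gcongr ?_ * _ * _; exact hanti Set.self_mem_Ici ht ht
    _ = V t₀ * Real.exp (G t) := by rw [Real.exp_neg]; field_simp

theorem le_mul_exp_of_hasDerivAt_le_decaying_rate {V V' : ℝ → ℝ} {lam k a t : ℝ} (hk : 0 ≤ k)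
    (ha : 0 < a) (hV : ∀ s ∈ Set.Ici 0, HasDerivAt V (V' s) s)
    (hle : ∀ s ∈ Set.Ici 0, V' s ≤ (-lam + k * Real.exp (-a * s)) * V s) (hV₀ : 0 ≤ V 0)
    (ht : 0 ≤ t) : V t ≤ V 0 * Real.exp (k / a - lam * t) := by
  set G : ℝ → ℝ := fun s => -lam * s - k / a * Real.exp (-a * s)
  have hG : ∀ s ∈ Set.Ici (0 : ℝ), HasDerivAt G (-lam + k * Real.exp (-a * s)) s := fun s _ => by
    refine (((hasDerivAt_id' s).const_mul (-lam)).sub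
      (((hasDerivAt_id' s).const_mul (-a)).exp.const_mul (k / a))).congr_deriv ?_
    field_simp
    ring
  have hGt : G t - G 0 ≤ k / a - lam * t := by
    have : 0 ≤ k / a * Real.exp (-a * t) := by positivity
    simp only [G, mul_zero, Real.exp_zero]
    linarith
  calc V t ≤ V 0 * Real.exp (G t - G 0) := le_mul_exp_sub_of_hasDerivAt hV hG hle ht
    _ ≤ V 0 * Real.exp (k / a - lam * t) := by gcongr

section Matrix

variable {ι : Type*} [Fintype ι]

theorem HasDerivAt.dotProduct {u w : ℝ → ι → ℝ} {u' w' : ι → ℝ} {t : ℝ}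
    (hu : HasDerivAt u u' t) (hw : HasDerivAt w w' t) :
    HasDerivAt (fun s => u s ⬝ᵥ w s) (u' ⬝ᵥ w t + u t ⬝ᵥ w') t := by
  unfold _root_.dotProduct
  rw [← Finset.sum_add_distrib]
  exact HasDerivAt.fun_sum fun i _ => (hasDerivAt_pi.1 hu i).mul (hasDerivAt_pi.1 hw i)

theorem HasDerivAt.mulVec {M : ℝ → Matrix ι ι ℝ} {M' : Matrix ι ι ℝ} {w : ℝ → ι → ℝ}
    {w' : ι → ℝ} {t : ℝ} (hM : HasDerivAt M M' t) (hw : HasDerivAt w w' t) :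
    HasDerivAt (fun s => M s *ᵥ w s) (M' *ᵥ w t + M t *ᵥ w') t :=
  hasDerivAt_pi.2 fun i => (hasDerivAt_pi.1 hM i).dotProduct hw

theorem dotProduct_self_nonneg {R : Type*} [CommRing R] [LinearOrder R] [IsStrictOrderedRing R]
    (v : ι → R) : 0 ≤ v ⬝ᵥ v :=
  Finset.sum_nonneg fun i _ => mul_self_nonneg (v i)

theorem Matrix.IsSymm.dotProduct_mulVec_comm {M : Matrix ι ι ℝ} (hM : M.IsSymm) (u w : ι → ℝ) :
    u ⬝ᵥ (M *ᵥ w) = w ⬝ᵥ (M *ᵥ u) := by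
  rw [← dotProduct_transpose_mulVec, hM.eq]

theorem Matrix.IsSymm.sq_dotProduct_mulVec_le {M : Matrix ι ι ℝ} (hM : M.IsSymm)
    (hpos : ∀ v, 0 ≤ v ⬝ᵥ (M *ᵥ v)) (u w : ι → ℝ) :
    (u ⬝ᵥ (M *ᵥ w)) ^ 2 ≤ (u ⬝ᵥ (M *ᵥ u)) * (w ⬝ᵥ (M *ᵥ w)) := by
  have hquad : ∀ x : ℝ, 0 ≤ (w ⬝ᵥ (M *ᵥ w)) * (x * x) + 2 * (u ⬝ᵥ (M *ᵥ w)) * x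
      + u ⬝ᵥ (M *ᵥ u) := fun x => by
    have := hpos (u + x • w)
    simp only [mulVec_add, mulVec_smul, dotProduct_add, add_dotProduct, dotProduct_smul,
      smul_dotProduct, smul_eq_mul, hM.dotProduct_mulVec_comm w u] at this
    linarith
  have := discrim_le_zero hquad
  rw [discrim] at this
  linarith

theorem Matrix.IsSymm.dotProduct_mulVec_le_of_bounds {M : Matrix ι ι ℝ} (hM : M.IsSymm)
    {p₁ p₂ c : ℝ} (hp₁ : 0 < p₁) (hp₁₂ : p₁ ≤ p₂) (hc : 0 ≤ c)
    (hbound : ∀ v, p₁ * (v ⬝ᵥ v) ≤ v ⬝ᵥ (M *ᵥ v) ∧ v ⬝ᵥ (M *ᵥ v) ≤ p₂ * (v ⬝ᵥ v))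
    {u w : ι → ℝ} (hw : w ⬝ᵥ w ≤ c ^ 2 * (u ⬝ᵥ u)) :
    u ⬝ᵥ (M *ᵥ w) ≤ c * (p₂ / p₁) * (u ⬝ᵥ (M *ᵥ u)) := by
  set κ := p₂ / p₁
  set q := u ⬝ᵥ (M *ᵥ u)
  have hκ : 1 ≤ κ := (one_le_div hp₁).2 hp₁₂
  have hpos : ∀ v, 0 ≤ v ⬝ᵥ (M *ᵥ v) := fun v =>
    (mul_nonneg hp₁.le (dotProduct_self_nonneg v)).trans (hbound v).1
  have huu : u ⬝ᵥ u ≤ q / p₁ := (le_div_iff₀ hp₁).2 (by linarith [(hbound u).1])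
  have hMw : w ⬝ᵥ (M *ᵥ w) ≤ c ^ 2 * κ * q := calc
    w ⬝ᵥ (M *ᵥ w) ≤ p₂ * (w ⬝ᵥ w) := (hbound w).2
    _ ≤ p₂ * (c ^ 2 * (q / p₁)) :=
      mul_le_mul_of_nonneg_left (hw.trans (by gcongr)) (hp₁.trans_le hp₁₂).le
    _ = c ^ 2 * κ * q := by ring
  refine le_of_sq_le_sq ?_ (mul_nonneg (by positivity) (hpos u))
  calc (u ⬝ᵥ (M *ᵥ w)) ^ 2 ≤ q * (w ⬝ᵥ (M *ᵥ w)) := hM.sq_dotProduct_mulVec_le hpos u w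
    _ ≤ q * (c ^ 2 * κ * q) := by gcongr; exact hpos u
    _ ≤ (c * κ * q) ^ 2 := by
      nlinarith [mul_nonneg (sq_nonneg (c * q)) (sub_nonneg.2 hκ)]

theorem hasDerivAt_dotProduct_mulVec_of_linear_ode {M : ℝ → Matrix ι ι ℝ}
    {M' A D : Matrix ι ι ℝ} {δ : ℝ → ι → ℝ} {t : ℝ} (hM : HasDerivAt M M' t)
    (hMt : (M t).IsSymm) (hδ : HasDerivAt δ ((A + D) *ᵥ δ t) t) :
    HasDerivAt (fun s => δ s ⬝ᵥ (M s *ᵥ δ s))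
      (δ t ⬝ᵥ ((M' + Aᵀ * M t + M t * A) *ᵥ δ t) + 2 * (δ t ⬝ᵥ (M t *ᵥ (D *ᵥ δ t)))) t := by
  refine (hδ.dotProduct (hM.mulVec hδ)).congr_deriv ?_
  have hAM : δ t ⬝ᵥ (Aᵀ *ᵥ (M t *ᵥ δ t)) = δ t ⬝ᵥ (M t *ᵥ (A *ᵥ δ t)) := by
    rw [dotProduct_transpose_mulVec, hMt.dotProduct_mulVec_comm, dotProduct_comm]
  rw [hMt.dotProduct_mulVec_comm ((A + D) *ᵥ δ t)]
  simp only [add_mulVec, mulVec_add, dotProduct_add, ← mulVec_mulVec, hAM]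
  ring

theorem Matrix.IsSymm.perturbed_lyapunov_rate_le {M M' A D : Matrix ι ι ℝ} (hM : M.IsSymm)
    {p₁ p₂ lam c : ℝ} (hp₁ : 0 < p₁) (hp₁₂ : p₁ ≤ p₂) (hc : 0 ≤ c)
    (hbound : ∀ v, p₁ * (v ⬝ᵥ v) ≤ v ⬝ᵥ (M *ᵥ v) ∧ v ⬝ᵥ (M *ᵥ v) ≤ p₂ * (v ⬝ᵥ v))
    {v : ι → ℝ} (hcontr : v ⬝ᵥ ((M' + Aᵀ * M + M * A) *ᵥ v) ≤ -lam * (v ⬝ᵥ (M *ᵥ v)))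
    (hD : Real.sqrt ((D *ᵥ v) ⬝ᵥ (D *ᵥ v)) ≤ c * Real.sqrt (v ⬝ᵥ v)) :
    v ⬝ᵥ ((M' + Aᵀ * M + M * A) *ᵥ v) + 2 * (v ⬝ᵥ (M *ᵥ (D *ᵥ v)))
      ≤ (-lam + 2 * c * (p₂ / p₁)) * (v ⬝ᵥ (M *ᵥ v)) := by
  have hDv : (D *ᵥ v) ⬝ᵥ (D *ᵥ v) ≤ c ^ 2 * (v ⬝ᵥ v) := by
    have := pow_le_pow_left₀ (Real.sqrt_nonneg _) hD 2
    rwa [Real.sq_sqrt (dotProduct_self_nonneg _), mul_pow,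
      Real.sq_sqrt (dotProduct_self_nonneg _)] at this
  linear_combination hcontr + 2 * hM.dotProduct_mulVec_le_of_bounds hp₁ hp₁₂ hc hbound hDv

theorem sqrt_dotProduct_self_le_of_dotProduct_mulVec_le {M₀ M₁ : Matrix ι ι ℝ} {u v : ι → ℝ}
    {p₁ p₂ E : ℝ} (hp₁ : 0 < p₁) (hE : 0 ≤ E) (hv : p₁ * (v ⬝ᵥ v) ≤ v ⬝ᵥ (M₁ *ᵥ v))
    (hu : u ⬝ᵥ (M₀ *ᵥ u) ≤ p₂ * (u ⬝ᵥ u)) (h : v ⬝ᵥ (M₁ *ᵥ v) ≤ u ⬝ᵥ (M₀ *ᵥ u) * E) :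
    Real.sqrt (v ⬝ᵥ v) ≤ Real.sqrt (p₂ / p₁) * Real.sqrt E * Real.sqrt (u ⬝ᵥ u) := by
  have hsq : v ⬝ᵥ v ≤ p₂ / p₁ * E * (u ⬝ᵥ u) := by
    rw [div_mul_eq_mul_div, div_mul_eq_mul_div, le_div_iff₀ hp₁]
    nlinarith [mul_le_mul_of_nonneg_right hu hE]
  calc Real.sqrt (v ⬝ᵥ v) ≤ Real.sqrt (p₂ / p₁ * E * (u ⬝ᵥ u)) := Real.sqrt_le_sqrt hsq
    _ = _ := by
      rw [Real.sqrt_mul' _ (dotProduct_self_nonneg u), Real.sqrt_mul' _ hE]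

end Matrix

theorem stmt12_general {n : ℕ}
    (A D M M' : ℝ → Matrix (Fin n) (Fin n) ℝ)
    (hMderiv : ∀ t ∈ Set.Ici (0 : ℝ), HasDerivAt M (M' t) t)
    (hMsymm : ∀ t, (M t).IsSymm)
    (p₁ p₂ : ℝ) (hp₁ : 0 < p₁) (hp₁₂ : p₁ ≤ p₂)
    (hbound : ∀ t ∈ Set.Ici (0 : ℝ), ∀ v : Fin n → ℝ,
      p₁ * (v ⬝ᵥ v) ≤ v ⬝ᵥ (M t *ᵥ v) ∧ v ⬝ᵥ (M t *ᵥ v) ≤ p₂ * (v ⬝ᵥ v))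
    (lam₀ C a : ℝ) (hC : 0 ≤ C) (ha : 0 < a)
    -- (i) contraction of the unperturbed dynamics in the metric M
    (hcontr : ∀ t ∈ Set.Ici (0 : ℝ), ∀ v : Fin n → ℝ,
      v ⬝ᵥ ((M' t + (A t)ᵀ * M t + M t * A t) *ᵥ v) ≤ -lam₀ * (v ⬝ᵥ (M t *ᵥ v)))
    -- (ii) exponential decay of the perturbation in Euclidean operator norm
    (hDdecay : ∀ t ∈ Set.Ici (0 : ℝ), ∀ v : Fin n → ℝ,
      Real.sqrt ((D t *ᵥ v) ⬝ᵥ (D t *ᵥ v)) ≤ C * Real.exp (-a * t) * Real.sqrt (v ⬝ᵥ v)) :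
    ∀ δ : ℝ → (Fin n → ℝ),
      (∀ t ∈ Set.Ici (0 : ℝ), HasDerivAt δ ((A t + D t) *ᵥ δ t) t) →
      ∀ t ∈ Set.Ici (0 : ℝ),
        Real.sqrt (δ t ⬝ᵥ δ t)
          ≤ Real.sqrt (p₂ / p₁) * Real.exp (C * p₂ / (p₁ * a))
            * Real.exp (-lam₀ * t / 2) * Real.sqrt (δ 0 ⬝ᵥ δ 0) := by
  intro δ hδ t ht
  have hp₂ : 0 < p₂ := hp₁.trans_le hp₁₂
  have hbound₀ := hbound 0 Set.self_mem_Ici (δ 0)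
  have hV : δ t ⬝ᵥ (M t *ᵥ δ t)
      ≤ δ 0 ⬝ᵥ (M 0 *ᵥ δ 0) * Real.exp (2 * C * (p₂ / p₁) / a - lam₀ * t) :=
    le_mul_exp_of_hasDerivAt_le_decaying_rate (by positivity) ha
      (fun s hs => hasDerivAt_dotProduct_mulVec_of_linear_ode (hMderiv s hs) (hMsymm s) (hδ s hs))
      (fun s hs => ((hMsymm s).perturbed_lyapunov_rate_le hp₁ hp₁₂ (by positivity) (hbound s hs)
        (hcontr s hs (δ s)) (hDdecay s hs (δ s))).trans_eq (by ring))
      ((mul_nonneg hp₁.le (dotProduct_self_nonneg _)).trans hbound₀.1) ht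
  have hexp : Real.exp (2 * C * (p₂ / p₁) / a - lam₀ * t)
      = (Real.exp (C * p₂ / (p₁ * a)) * Real.exp (-lam₀ * t / 2)) ^ 2 := by
    rw [← Real.exp_add, ← Real.exp_nat_mul]
    congr 1
    field_simp
    ring
  calc Real.sqrt (δ t ⬝ᵥ δ t)
      ≤ Real.sqrt (p₂ / p₁) * Real.sqrt (Real.exp (2 * C * (p₂ / p₁) / a - lam₀ * t))
        * Real.sqrt (δ 0 ⬝ᵥ δ 0) :=
      sqrt_dotProduct_self_le_of_dotProduct_mulVec_le hp₁ (Real.exp_pos _).le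
        (hbound t ht (δ t)).1 hbound₀.2 hV
    _ = _ := by rw [hexp, Real.sqrt_sq (by positivity), ← mul_assoc]

theorem stmt12 {n : ℕ}
    (A D M M' : ℝ → Matrix (Fin n) (Fin n) ℝ)
    (hA : ContinuousOn A (Set.Ici 0)) (hD : ContinuousOn D (Set.Ici 0))
    (hMderiv : ∀ t ∈ Set.Ici (0 : ℝ), HasDerivAt M (M' t) t)
    (hM'cont : ContinuousOn M' (Set.Ici 0))
    (hMsymm : ∀ t, (M t).IsSymm)
    (p₁ p₂ : ℝ) (hp₁ : 0 < p₁) (hp₁₂ : p₁ ≤ p₂)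
    (hbound : ∀ t ∈ Set.Ici (0 : ℝ), ∀ v : Fin n → ℝ,
      p₁ * (v ⬝ᵥ v) ≤ v ⬝ᵥ (M t *ᵥ v) ∧ v ⬝ᵥ (M t *ᵥ v) ≤ p₂ * (v ⬝ᵥ v))
    (lam₀ C a : ℝ) (hlam₀ : 0 < lam₀) (hC : 0 ≤ C) (ha : 0 < a)
    -- (i) contraction of the unperturbed dynamics in the metric M
    (hcontr : ∀ t ∈ Set.Ici (0 : ℝ), ∀ v : Fin n → ℝ,
      v ⬝ᵥ ((M' t + (A t)ᵀ * M t + M t * A t) *ᵥ v) ≤ -lam₀ * (v ⬝ᵥ (M t *ᵥ v)))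
    -- (ii) exponential decay of the perturbation in Euclidean operator norm
    (hDdecay : ∀ t ∈ Set.Ici (0 : ℝ), ∀ v : Fin n → ℝ,
      Real.sqrt ((D t *ᵥ v) ⬝ᵥ (D t *ᵥ v)) ≤ C * Real.exp (-a * t) * Real.sqrt (v ⬝ᵥ v)) :
    ∀ δ : ℝ → (Fin n → ℝ),
      (∀ t ∈ Set.Ici (0 : ℝ), HasDerivAt δ ((A t + D t) *ᵥ δ t) t) →
      ∀ t ∈ Set.Ici (0 : ℝ),
        Real.sqrt (δ t ⬝ᵥ δ t)
          ≤ Real.sqrt (p₂ / p₁) * Real.exp (C * p₂ / (p₁ * a))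
            * Real.exp (-lam₀ * t / 2) * Real.sqrt (δ 0 ⬝ᵥ δ 0) :=
  stmt12_general A D M M' hMderiv hMsymm p₁ p₂ hp₁ hp₁₂ hbound lam₀ C a hC ha hcontr hDdecay
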